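/- arXiv:math/0409610 — 4 statements merged into one kernel-verified Lean document; each statement's English description precedes it below -/
import Mathlib

section
/- With r_{n,N}² = 2π e^{−(n_+ + N_+)} n_+^{n_+} N_+^{N_+} / (N! n!), where n_+ = n + 1/2 and N_+ = N + 1/2, one has r_{n,N} = 1 + (1/48)(1/n + 1/N) + o(1/n + 1/N) as min(n,N) → ∞. -/
open Filter Real Asymptotics Topology

noncomputable def Ffun (t : ℝ) : ℝ := (1+t) * Real.log (1+t) - (1-t) * Real.log (1-t)

lemma Ffun_hasDerivAt {t : ℝ} (h1 : -1 < t) (h2 : t < 1) :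
    HasDerivAt Ffun (2 + Real.log (1 - t^2)) t := by
  have h1' : (0:ℝ) < 1 + t := by linarith
  have h2' : (0:ℝ) < 1 - t := by linarith
  have e1 : HasDerivAt (fun s : ℝ => 1 + s) 1 t := (hasDerivAt_id t).const_add 1
  have e2 : HasDerivAt (fun s : ℝ => 1 - s) (-1) t := (hasDerivAt_id t).const_sub 1
  have l1 : HasDerivAt (fun s : ℝ => Real.log (1+s)) (1/(1+t)) t := by
    simpa [Function.comp_def] using (Real.hasDerivAt_log h1'.ne').comp t e1
  have l2 : HasDerivAt (fun s : ℝ => Real.log (1-s)) (-(1/(1-t))) t := by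
    simpa [Function.comp_def] using (Real.hasDerivAt_log h2'.ne').comp t e2
  have := (e1.mul l1).sub (e2.mul l2)
  refine this.congr_deriv ?_
  rw [show (1:ℝ) - t^2 = (1+t)*(1-t) by ring, Real.log_mul h1'.ne' h2'.ne']
  field_simp
  ring

lemma log_one_sub_le {x : ℝ} (h1 : x < 1) : Real.log (1-x) ≤ -x := by
  have := Real.log_le_sub_one_of_pos (by linarith : (0:ℝ) < 1 - x)
  linarith

lemma le_log_one_sub {x : ℝ} (h0 : 0 ≤ x) (h1 : x ≤ 1/4) :
    -x - (4/3)*x^2 ≤ Real.log (1-x) := by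
  have hx : (0:ℝ) < 1 - x := by linarith
  have := Real.log_le_sub_one_of_pos (inv_pos.mpr hx)
  rw [Real.log_inv] at this
  have h2 : (1-x)⁻¹ - 1 = x / (1-x) := by field_simp; ring
  rw [h2] at this
  have h3 : x / (1-x) ≤ x + (4/3)*x^2 := by
    rw [div_le_iff₀ hx]; nlinarith
  linarith

lemma Ffun_zero : Ffun 0 = 0 := by simp [Ffun]

lemma Ffun_le {t : ℝ} (h0 : 0 ≤ t) (h1 : t ≤ 1/2) : Ffun t ≤ 2*t - t^3/3 := by
  set g : ℝ → ℝ := fun s => 2*s - s^3/3 - Ffun s with hg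
  have hd : ∀ s ∈ Set.Icc (0:ℝ) (1/2), HasDerivAt g (-(s^2) - Real.log (1-s^2)) s := by
    intro s hs
    obtain ⟨hs0, hs1⟩ := hs
    have hF := Ffun_hasDerivAt (by linarith : (-1:ℝ) < s) (by linarith : s < 1)
    have h2t : HasDerivAt (fun s : ℝ => 2*s - s^3/3) (2 - s^2) s := by
      have := ((hasDerivAt_id s).const_mul 2).sub ((hasDerivAt_pow 3 s).div_const 3)
      refine this.congr_deriv ?_; push_cast; ring
    have := h2t.sub hF
    refine this.congr_deriv ?_; ring
  have hmono : MonotoneOn g (Set.Icc (0:ℝ) (1/2)) := by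
    apply monotoneOn_of_deriv_nonneg (convex_Icc _ _)
    · exact fun s hs => ((hd s hs).continuousAt).continuousWithinAt
    · intro s hs
      rw [interior_Icc] at hs
      exact ((hd s (Set.mem_Icc_of_Ioo hs)).differentiableAt).differentiableWithinAt
    · intro s hs
      rw [interior_Icc] at hs
      rw [(hd s (Set.mem_Icc_of_Ioo hs)).deriv]
      have := log_one_sub_le (x := s^2) (by nlinarith [hs.1, hs.2])
      linarith
  have h0' : g 0 = 0 := by simp [hg, Ffun_zero]
  have := hmono (Set.left_mem_Icc.mpr (by norm_num)) (Set.mem_Icc.mpr ⟨h0, h1⟩) h0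
  rw [h0'] at this
  have h2 : (0:ℝ) ≤ 2*t - t^3/3 - Ffun t := this
  linarith

lemma le_Ffun {t : ℝ} (h0 : 0 ≤ t) (h1 : t ≤ 1/2) :
    2*t - t^3/3 - (4/15)*t^5 ≤ Ffun t := by
  set g : ℝ → ℝ := fun s => Ffun s - (2*s - s^3/3 - (4/15)*s^5) with hg
  have hd : ∀ s ∈ Set.Icc (0:ℝ) (1/2),
      HasDerivAt g (Real.log (1-s^2) + s^2 + (4/3)*s^4) s := by
    intro s hs
    obtain ⟨hs0, hs1⟩ := hs
    have hF := Ffun_hasDerivAt (by linarith : (-1:ℝ) < s) (by linarith : s < 1)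
    have hp : HasDerivAt (fun s : ℝ => 2*s - s^3/3 - (4/15)*s^5)
        (2 - s^2 - (4/3)*s^4) s := by
      have := (((hasDerivAt_id s).const_mul 2).sub ((hasDerivAt_pow 3 s).div_const 3)).sub
        ((hasDerivAt_pow 5 s).const_mul (4/15))
      refine this.congr_deriv ?_; push_cast; ring
    have := hF.sub hp
    refine this.congr_deriv ?_; ring
  have hmono : MonotoneOn g (Set.Icc (0:ℝ) (1/2)) := by
    apply monotoneOn_of_deriv_nonneg (convex_Icc _ _)
    · exact fun s hs => ((hd s hs).continuousAt).continuousWithinAt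
    · intro s hs
      rw [interior_Icc] at hs
      exact ((hd s (Set.mem_Icc_of_Ioo hs)).differentiableAt).differentiableWithinAt
    · intro s hs
      rw [interior_Icc] at hs
      rw [(hd s (Set.mem_Icc_of_Ioo hs)).deriv]
      have := le_log_one_sub (x := s^2) (by positivity) (by nlinarith [hs.1, hs.2])
      nlinarith [hs.1, hs.2]
  have h0' : g 0 = 0 := by simp [hg, Ffun_zero]
  have := hmono (Set.left_mem_Icc.mpr (by norm_num)) (Set.mem_Icc.mpr ⟨h0, h1⟩) h0
  rw [h0'] at this
  have h2 : (0:ℝ) ≤ Ffun t - (2*t - t^3/3 - (4/15)*t^5) := this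
  linarith

noncomputable def afun (n : ℕ) : ℝ :=
  Real.sqrt (2*π) * ((n:ℝ)+1/2) ^ ((n:ℝ)+1/2) * Real.exp (-((n:ℝ)+1/2)) / (n.factorial : ℝ)

noncomputable def bfun (n : ℕ) : ℝ := Real.log (afun n)

lemma afun_pos (n : ℕ) : 0 < afun n := by
  have h1 : (0:ℝ) < (n:ℝ)+1/2 := by positivity
  have h2 : (0:ℝ) < (n.factorial : ℝ) := by exact_mod_cast n.factorial_pos
  have h3 : (0:ℝ) < 2*π := by positivity
  unfold afun
  positivity

lemma bfun_eq (n : ℕ) : bfun n = Real.log (Real.sqrt (2*π)) +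
    (((n:ℝ)+1/2) * Real.log ((n:ℝ)+1/2) - ((n:ℝ)+1/2)) - Real.log (n.factorial : ℝ) := by
  have h1 : (0:ℝ) < (n:ℝ)+1/2 := by positivity
  have h2 : ((n.factorial : ℝ)) ≠ 0 := by
    exact_mod_cast n.factorial_pos.ne'
  have hs : Real.sqrt (2*π) ≠ 0 := by positivity
  unfold bfun afun
  rw [Real.log_div (by positivity) h2, Real.log_mul (by positivity) (Real.exp_ne_zero _),
    Real.log_mul hs (by positivity), Real.log_rpow h1, Real.log_exp]
  ring

lemma bfun_sub (k : ℕ) :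
    bfun k - bfun (k+1) = 1 - Ffun (1/(2*((k:ℝ)+1))) * ((k:ℝ)+1) := by
  have hx0 : (0:ℝ) ≤ (k:ℝ) := Nat.cast_nonneg k
  have h1 : (0:ℝ) < (k:ℝ)+1 := by linarith
  have h2 : (0:ℝ) < (k:ℝ)+1/2 := by linarith
  have h3 : (0:ℝ) < (k:ℝ)+3/2 := by linarith
  have hfac : Real.log ((k+1).factorial : ℝ) = Real.log ((k:ℝ)+1) + Real.log (k.factorial : ℝ) := by
    rw [Nat.factorial_succ]
    push_cast
    rw [Real.log_mul (by positivity) (by exact_mod_cast k.factorial_pos.ne')]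
  have ht1 : 1 + 1/(2*((k:ℝ)+1)) = ((k:ℝ)+3/2)/((k:ℝ)+1) := by field_simp; ring
  have ht2 : 1 - 1/(2*((k:ℝ)+1)) = ((k:ℝ)+1/2)/((k:ℝ)+1) := by field_simp; ring
  rw [bfun_eq, bfun_eq, hfac, Ffun, ht1, ht2, Real.log_div h3.ne' h1.ne',
    Real.log_div h2.ne' h1.ne']
  push_cast
  have : ((k:ℝ)+1+1/2) = (k:ℝ)+3/2 := by ring
  rw [this]
  field_simp
  ring

lemma c_lower (k : ℕ) : 1/(24*((k:ℝ)+1)^2) ≤ bfun k - bfun (k+1) := by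
  have h1 : (0:ℝ) < (k:ℝ)+1 := by positivity
  set t : ℝ := 1/(2*((k:ℝ)+1)) with ht
  have htpos : 0 < t := by positivity
  have hthalf : t ≤ 1/2 := by
    rw [ht, div_le_div_iff₀ (by positivity) (by norm_num)]
    nlinarith [Nat.cast_nonneg (α := ℝ) k]
  have hF := Ffun_le htpos.le hthalf
  rw [bfun_sub]
  have heq : 1/(24*((k:ℝ)+1)^2) = 1 - (2*t - t^3/3)*((k:ℝ)+1) := by
    rw [ht]; field_simp; ring
  rw [heq]
  nlinarith [hF, h1]

lemma c_upper (k : ℕ) :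
    bfun k - bfun (k+1) ≤ 1/(24*((k:ℝ)+1)^2) + 1/(120*((k:ℝ)+1)^4) := by
  have h1 : (0:ℝ) < (k:ℝ)+1 := by positivity
  set t : ℝ := 1/(2*((k:ℝ)+1)) with ht
  have htpos : 0 < t := by positivity
  have hthalf : t ≤ 1/2 := by
    rw [ht, div_le_div_iff₀ (by positivity) (by norm_num)]
    nlinarith [Nat.cast_nonneg (α := ℝ) k]
  have hF := le_Ffun htpos.le hthalf
  rw [bfun_sub]
  have heq : 1/(24*((k:ℝ)+1)^2) + 1/(120*((k:ℝ)+1)^4)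
      = 1 - (2*t - t^3/3 - (4/15)*t^5)*((k:ℝ)+1) := by
    rw [ht]; field_simp; ring
  rw [heq]
  nlinarith [hF, h1]

lemma bfun_formula {n : ℕ} (hn : 1 ≤ n) :
    bfun n = Real.log (Real.sqrt π) - Real.log (Stirling.stirlingSeq n) +
      ((n:ℝ)+1/2) * Real.log (1 + 1/(2*(n:ℝ))) - 1/2 := by
  have hn0 : (0:ℝ) < (n:ℝ) := by exact_mod_cast hn
  have hS := Stirling.log_stirlingSeq_formula n
  have hfac : Real.log (n.factorial : ℝ) = Real.log (Stirling.stirlingSeq n)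
      + 1/2 * Real.log (2*(n:ℝ)) + (n:ℝ) * Real.log ((n:ℝ) / Real.exp 1) := by
    rw [hS]; push_cast; ring
  have h1 : Real.log ((n:ℝ)/Real.exp 1) = Real.log (n:ℝ) - 1 := by
    rw [Real.log_div hn0.ne' (Real.exp_ne_zero 1), Real.log_exp]
  have h2 : Real.log (2*(n:ℝ)) = Real.log 2 + Real.log (n:ℝ) :=
    Real.log_mul two_ne_zero hn0.ne'
  have h3 : Real.log ((n:ℝ)+1/2) = Real.log (n:ℝ) + Real.log (1 + 1/(2*(n:ℝ))) := by
    rw [← Real.log_mul hn0.ne' (by positivity)]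
    congr 1; field_simp
  have h4 : Real.log (Real.sqrt (2*π)) = 1/2 * Real.log 2 + Real.log (Real.sqrt π) := by
    rw [Real.log_sqrt (by positivity), Real.log_sqrt pi_pos.le,
      Real.log_mul two_ne_zero pi_pos.ne']
    ring
  rw [bfun_eq, hfac, h1, h2, h3, h4]
  ring

lemma bfun_tendsto_zero : Tendsto bfun atTop (𝓝 0) := by
  have hS : Tendsto (fun n => Real.log (Stirling.stirlingSeq n)) atTop
      (𝓝 (Real.log (Real.sqrt π))) := by
    have hpos : (0:ℝ) < Real.sqrt π := Real.sqrt_pos.mpr pi_pos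
    exact ((Real.continuousAt_log hpos.ne').tendsto).comp Stirling.tendsto_stirlingSeq_sqrt_pi
  have hmain : Tendsto (fun x : ℝ => x * Real.log (1 + (1/2)/x)) atTop (𝓝 (1/2)) :=
    Real.tendsto_mul_log_one_add_div_atTop (1/2)
  have hnat : Tendsto (fun n : ℕ => (n:ℝ)) atTop atTop := tendsto_natCast_atTop_atTop
  have hmain' : Tendsto (fun n : ℕ => (n:ℝ) * Real.log (1 + 1/(2*(n:ℝ)))) atTop (𝓝 (1/2)) := by
    have := hmain.comp hnat
    refine this.congr (fun n => ?_)
    simp only [Function.comp]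
    congr 2
    ring
  have hlog0 : Tendsto (fun n : ℕ => Real.log (1 + 1/(2*(n:ℝ)))) atTop (𝓝 0) := by
    have h1 : Tendsto (fun n : ℕ => 1 + 1/(2*(n:ℝ))) atTop (𝓝 1) := by
      have : Tendsto (fun n : ℕ => 1/(2*(n:ℝ))) atTop (𝓝 0) := by
        have h := (hnat.const_mul_atTop (show (0:ℝ) < 2 by norm_num)).inv_tendsto_atTop
        simpa [Pi.inv_def, one_div, mul_inv, mul_comm] using h
      simpa using (tendsto_const_nhds (x := (1:ℝ))).add this
    have := ((Real.continuousAt_log one_ne_zero).tendsto).comp h1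
    simpa [Function.comp_def] using this
  have hhalf : Tendsto (fun n : ℕ => ((n:ℝ)+1/2) * Real.log (1 + 1/(2*(n:ℝ)))) atTop
      (𝓝 (1/2)) := by
    have h := hmain'.add (hlog0.const_mul (1/2))
    rw [show (1/2 + 1/2 * 0 : ℝ) = 1/2 by norm_num] at h
    refine h.congr (fun n => ?_)
    ring
  have : Tendsto (fun n : ℕ => Real.log (Real.sqrt π) - Real.log (Stirling.stirlingSeq n) +
      ((n:ℝ)+1/2) * Real.log (1 + 1/(2*(n:ℝ))) - 1/2) atTop (𝓝 0) := by
    have h := ((tendsto_const_nhds (x := Real.log (Real.sqrt π))).sub hS).add hhalf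
    have h2 := h.sub (tendsto_const_nhds (x := (1/2:ℝ)))
    convert h2 using 2
    ring
  refine this.congr' ?_
  filter_upwards [eventually_ge_atTop 1] with n hn
  exact (bfun_formula hn).symm

lemma bfun_lower_partial (n : ℕ) :
    ∀ m, n ≤ m → 1/(24*((n:ℝ)+1)) - 1/(24*((m:ℝ)+1)) ≤ bfun n - bfun m := by
  intro m hm
  induction m with
  | zero =>
    have : n = 0 := Nat.le_zero.mp hm
    subst this; norm_num
  | succ m ih =>
    rcases Nat.lt_or_ge n (m+1) with h | h
    · have hnm : n ≤ m := Nat.lt_succ_iff.mp h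
      have h1 := ih hnm
      have h2 := c_lower m
      have hm0 : (0:ℝ) ≤ (m:ℝ) := Nat.cast_nonneg m
      have key : 1/(24*((m:ℝ)+1)) - 1/(24*((m:ℝ)+1+1)) ≤ 1/(24*((m:ℝ)+1)^2) := by
        rw [div_sub_div _ _ (by positivity) (by positivity),
          div_le_div_iff₀ (by positivity) (by positivity)]
        nlinarith
      push_cast
      calc 1/(24*((n:ℝ)+1)) - 1/(24*((m:ℝ)+1+1))
          = (1/(24*((n:ℝ)+1)) - 1/(24*((m:ℝ)+1))) +
            (1/(24*((m:ℝ)+1)) - 1/(24*((m:ℝ)+1+1))) := by ring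
        _ ≤ (bfun n - bfun m) + 1/(24*((m:ℝ)+1)^2) := add_le_add h1 key
        _ ≤ bfun n - bfun (m+1) := by linarith
    · have : n = m+1 := le_antisymm hm h
      subst this; norm_num
  
lemma bfun_upper_partial {n : ℕ} (hn : 1 ≤ n) :
    ∀ m, n ≤ m → bfun n - bfun m ≤
      (1/24 + 1/(120*(n:ℝ)^2)) * (1/(n:ℝ) - 1/(m:ℝ)) := by
  have hn0 : (1:ℝ) ≤ (n:ℝ) := by exact_mod_cast hn
  intro m hm
  induction m with
  | zero => omega
  | succ m ih =>
    rcases Nat.lt_or_ge n (m+1) with h | h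
    · have hnm : n ≤ m := Nat.lt_succ_iff.mp h
      have h1 := ih hnm
      have h2 := c_upper m
      have hm1 : (1:ℝ) ≤ (m:ℝ) := by exact_mod_cast hn.trans hnm
      have hmn : (n:ℝ) ≤ (m:ℝ) := by exact_mod_cast hnm
      have e1 : 1/(m:ℝ) - 1/((m:ℝ)+1) = 1/((m:ℝ)*((m:ℝ)+1)) := by
        field_simp; ring
      have key : 1/(24*((m:ℝ)+1)^2) + 1/(120*((m:ℝ)+1)^4) ≤
          (1/24 + 1/(120*(n:ℝ)^2)) * (1/(m:ℝ) - 1/((m:ℝ)+1)) := by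
        have hsq : (n:ℝ)^2 ≤ (m:ℝ)^2 := by nlinarith
        have i1 : 1/(24*((m:ℝ)+1)^2) ≤ 1/(24*((m:ℝ)*((m:ℝ)+1))) := by
          rw [div_le_div_iff₀ (by positivity) (by positivity)]
          nlinarith
        have i2 : 1/(120*((m:ℝ)+1)^4) ≤ 1/(120*(n:ℝ)^2*((m:ℝ)*((m:ℝ)+1))) := by
          rw [div_le_div_iff₀ (by positivity) (by positivity)]
          nlinarith [hsq, hm1]
        calc 1/(24*((m:ℝ)+1)^2) + 1/(120*((m:ℝ)+1)^4)
            ≤ 1/(24*((m:ℝ)*((m:ℝ)+1))) + 1/(120*(n:ℝ)^2*((m:ℝ)*((m:ℝ)+1))) :=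
              add_le_add i1 i2
          _ = (1/24 + 1/(120*(n:ℝ)^2)) * (1/((m:ℝ)*((m:ℝ)+1))) := by
              field_simp
          _ = (1/24 + 1/(120*(n:ℝ)^2)) * (1/(m:ℝ) - 1/((m:ℝ)+1)) := by rw [e1]
      push_cast
      calc bfun n - bfun (m+1) = (bfun n - bfun m) + (bfun m - bfun (m+1)) := by ring
        _ ≤ (1/24 + 1/(120*(n:ℝ)^2)) * (1/(n:ℝ) - 1/(m:ℝ)) +
            (1/24 + 1/(120*(n:ℝ)^2)) * (1/(m:ℝ) - 1/((m:ℝ)+1)) :=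
              add_le_add h1 (h2.trans key)
        _ = (1/24 + 1/(120*(n:ℝ)^2)) * (1/(n:ℝ) - 1/((m:ℝ)+1)) := by ring
    · have : n = m+1 := le_antisymm hm h
      subst this; push_cast; norm_num

lemma bfun_lower {n : ℕ} : 1/(24*((n:ℝ)+1)) ≤ bfun n := by
  have hlim : Filter.Tendsto (fun m : ℕ => 1/(24*((n:ℝ)+1)) - 1/(24*((m:ℝ)+1)))
      Filter.atTop (𝓝 (1/(24*((n:ℝ)+1)))) := by
    have h0 : Filter.Tendsto (fun m : ℕ => 1/(24*((m:ℝ)+1))) Filter.atTop (𝓝 0) := by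
      have := tendsto_one_div_add_atTop_nhds_zero_nat (𝕜 := ℝ)
      have h := this.const_mul (1/24 : ℝ)
      simp only [mul_zero] at h
      refine h.congr (fun m => ?_)
      field_simp
    simpa using (tendsto_const_nhds (x := 1/(24*((n:ℝ)+1)))).sub h0
  have hlim2 : Filter.Tendsto (fun m : ℕ => bfun n - bfun m) Filter.atTop (𝓝 (bfun n)) := by
    simpa using (tendsto_const_nhds (x := bfun n)).sub bfun_tendsto_zero
  refine le_of_tendsto_of_tendsto hlim hlim2 ?_
  filter_upwards [Filter.eventually_ge_atTop n] with m hm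
  exact bfun_lower_partial n m hm

lemma bfun_upper {n : ℕ} (hn : 1 ≤ n) :
    bfun n ≤ 1/(24*(n:ℝ)) + 1/(120*(n:ℝ)^3) := by
  have hn0 : (0:ℝ) < (n:ℝ) := by exact_mod_cast hn
  have hlim2 : Filter.Tendsto (fun m : ℕ => bfun n - bfun m) Filter.atTop (𝓝 (bfun n)) := by
    simpa using (tendsto_const_nhds (x := bfun n)).sub bfun_tendsto_zero
  have hlim : Filter.Tendsto
      (fun m : ℕ => (1/24 + 1/(120*(n:ℝ)^2)) * (1/(n:ℝ) - 1/(m:ℝ)))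
      Filter.atTop (𝓝 ((1/24 + 1/(120*(n:ℝ)^2)) * (1/(n:ℝ)))) := by
    have h0 : Filter.Tendsto (fun m : ℕ => 1/(m:ℝ)) Filter.atTop (𝓝 0) :=
      tendsto_one_div_atTop_nhds_zero_nat
    have := ((tendsto_const_nhds (x := 1/(n:ℝ))).sub h0).const_mul
      (1/24 + 1/(120*(n:ℝ)^2) : ℝ)
    simpa using this
  have hle : bfun n ≤ (1/24 + 1/(120*(n:ℝ)^2)) * (1/(n:ℝ)) := by
    refine le_of_tendsto_of_tendsto hlim2 hlim ?_
    filter_upwards [Filter.eventually_ge_atTop n] with m hm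
    exact bfun_upper_partial hn m hm
  calc bfun n ≤ (1/24 + 1/(120*(n:ℝ)^2)) * (1/(n:ℝ)) := hle
    _ = 1/(24*(n:ℝ)) + 1/(120*(n:ℝ)^3) := by field_simp

lemma bfun_est {n : ℕ} (hn : 1 ≤ n) : |bfun n - 1/(24*(n:ℝ))| ≤ 1/(12*(n:ℝ)^2) := by
  have hn1 : (1:ℝ) ≤ (n:ℝ) := by exact_mod_cast hn
  have hl := bfun_lower (n := n)
  have hu := bfun_upper hn
  rw [abs_le]
  constructor
  · have h : 1/(24*(n:ℝ)) - 1/(24*((n:ℝ)+1)) ≤ 1/(12*(n:ℝ)^2) := by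
      rw [div_sub_div _ _ (by positivity) (by positivity),
        div_le_div_iff₀ (by positivity) (by positivity)]
      nlinarith
    linarith
  · have h : 1/(120*(n:ℝ)^3) ≤ 1/(12*(n:ℝ)^2) := by
      rw [div_le_div_iff₀ (by positivity) (by positivity)]
      nlinarith
    linarith

lemma bfun_small {n : ℕ} (hn : 1 ≤ n) : bfun n ≤ 1/(20*(n:ℝ)) := by
  have hn1 : (1:ℝ) ≤ (n:ℝ) := by exact_mod_cast hn
  have hnpos : (0:ℝ) < (n:ℝ) := by linarith
  have hu := bfun_upper hn
  have hcube : (n:ℝ) ≤ (n:ℝ)^3 := by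
    nlinarith [mul_nonneg (mul_nonneg (sub_nonneg.mpr hn1) hnpos.le)
      (by positivity : (0:ℝ) ≤ (n:ℝ)+1)]
  have h : 1/(120*(n:ℝ)^3) ≤ 1/(120*(n:ℝ)) := by
    apply div_le_div_of_nonneg_left (by norm_num) (by positivity)
    nlinarith
  have h2 : 1/(24*(n:ℝ)) + 1/(120*(n:ℝ)) = 1/(20*(n:ℝ)) := by
    field_simp
    ring
  linarith

lemma bfun_nonneg (n : ℕ) : 0 ≤ bfun n := by
  have := bfun_lower (n := n)
  have h : (0:ℝ) < 1/(24*((n:ℝ)+1)) := by positivity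
  linarith

set_option maxHeartbeats 1000000 in
/-- Pure-real main estimate. -/
lemma main_est {x y m ε bn bN : ℝ} (hm1 : 1 ≤ m) (hx : m ≤ x) (hy : m ≤ y)
    (hεm : 1/m ≤ ε)
    (hbn0 : 0 ≤ bn) (hbN0 : 0 ≤ bN)
    (hbn : bn ≤ 1/(20*x)) (hbN : bN ≤ 1/(20*y))
    (hen : |bn - 1/(24*x)| ≤ 1/(12*x^2)) (heN : |bN - 1/(24*y)| ≤ 1/(12*y^2)) :
    |Real.exp ((bn+bN)/2) - 1 - 1/48*(1/x+1/y)| ≤ ε * |1/x + 1/y| := by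
  have hmpos : (0:ℝ) < m := by linarith
  have hxpos : (0:ℝ) < x := by linarith
  have hypos : (0:ℝ) < y := by linarith
  have hx1 : (1:ℝ) ≤ x := by linarith
  have hy1 : (1:ℝ) ≤ y := by linarith
  have hPpos : (0:ℝ) < 1/x + 1/y := by positivity
  have hPM : 1/x + 1/y ≤ 2/m := by
    have h1 : 1/x ≤ 1/m := div_le_div_of_nonneg_left (by norm_num) hmpos hx
    have h2 : 1/y ≤ 1/m := div_le_div_of_nonneg_left (by norm_num) hmpos hy
    have : (1:ℝ)/m + 1/m = 2/m := by ring
    linarith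
  have hP2 : 1/x + 1/y ≤ 2 := by
    have h1 : 1/x ≤ 1 := by rw [div_le_one hxpos]; linarith
    have h2 : 1/y ≤ 1 := by rw [div_le_one hypos]; linarith
    linarith
  have hs0 : 0 ≤ (bn+bN)/2 := by linarith
  have hsP : (bn+bN)/2 ≤ (1/40)*(1/x+1/y) := by
    have e1 : 1/(20*x) = (1/20)*(1/x) := by ring
    have e2 : 1/(20*y) = (1/20)*(1/y) := by ring
    rw [e1] at hbn; rw [e2] at hbN
    linarith
  have hs1 : (bn+bN)/2 ≤ 1 := by nlinarith
  -- |s - u| bound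
  have hq1 : 1/(12*x^2) ≤ 1/(12*m)*(1/x) := by
    have e : 1/(12*m)*(1/x) = 1/(12*m*x) := by
      field_simp
    rw [e, div_le_div_iff₀ (by positivity) (by positivity)]
    nlinarith
  have hq2 : 1/(12*y^2) ≤ 1/(12*m)*(1/y) := by
    have e : 1/(12*m)*(1/y) = 1/(12*m*y) := by
      field_simp
    rw [e, div_le_div_iff₀ (by positivity) (by positivity)]
    nlinarith
  have hsu : |(bn+bN)/2 - 1/48*(1/x+1/y)| ≤ 1/(24*m)*(1/x+1/y) := by
    have e1 : (bn+bN)/2 - 1/48*(1/x+1/y) = (bn - 1/(24*x))/2 + (bN - 1/(24*y))/2 := by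
      field_simp
      ring
    calc |(bn+bN)/2 - 1/48*(1/x+1/y)|
        = |(bn - 1/(24*x))/2 + (bN - 1/(24*y))/2| := by rw [e1]
      _ ≤ |(bn - 1/(24*x))/2| + |(bN - 1/(24*y))/2| := abs_add_le _ _
      _ = |bn - 1/(24*x)|/2 + |bN - 1/(24*y)|/2 := by rw [abs_div, abs_div]; norm_num
      _ ≤ (1/(12*x^2))/2 + (1/(12*y^2))/2 := by linarith
      _ ≤ (1/(12*m)*(1/x))/2 + (1/(12*m)*(1/y))/2 := by linarith
      _ = 1/(24*m)*(1/x+1/y) := by ring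
  -- exp bound
  have hexp : |Real.exp ((bn+bN)/2) - 1 - (bn+bN)/2| ≤ (3/4)*((bn+bN)/2)^2 := by
    have hlo := Real.add_one_le_exp ((bn+bN)/2)
    have hhi : Real.exp ((bn+bN)/2) ≤ 1 + (bn+bN)/2 + ((bn+bN)/2)^2*(3/4) := by
      have h := Real.exp_bound' hs0 hs1 (n := 2) (by norm_num)
      norm_num [Finset.sum_range_succ] at h
      linarith [h]
    rw [abs_le]
    constructor <;> nlinarith
  have hs2 : ((bn+bN)/2)^2 ≤ (1/800)*(1/x+1/y)*(1/m) := by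
    have h1 : ((bn+bN)/2)^2 ≤ ((1/40)*(1/x+1/y))^2 := by nlinarith
    have h3 : (1/1600)*(1/x+1/y)*(1/x+1/y) ≤ (1/1600)*(1/x+1/y)*(2/m) := by
      apply mul_le_mul_of_nonneg_left hPM (by positivity)
    have e : (1/1600)*(1/x+1/y)*(2/m) = (1/800)*(1/x+1/y)*(1/m) := by
      ring
    nlinarith
  -- assemble
  have htotal : |Real.exp ((bn+bN)/2) - 1 - 1/48*(1/x+1/y)| ≤
      (3/4)*((1/800)*(1/x+1/y)*(1/m)) + 1/(24*m)*(1/x+1/y) := by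
    calc |Real.exp ((bn+bN)/2) - 1 - 1/48*(1/x+1/y)|
        = |(Real.exp ((bn+bN)/2) - 1 - (bn+bN)/2) + ((bn+bN)/2 - 1/48*(1/x+1/y))| := by
          congr 1; ring
      _ ≤ |Real.exp ((bn+bN)/2) - 1 - (bn+bN)/2| + |(bn+bN)/2 - 1/48*(1/x+1/y)| := abs_add_le _ _
      _ ≤ (3/4)*((bn+bN)/2)^2 + 1/(24*m)*(1/x+1/y) := add_le_add hexp hsu
      _ ≤ (3/4)*((1/800)*(1/x+1/y)*(1/m)) + 1/(24*m)*(1/x+1/y) := by nlinarith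
  have hfin : (3/4)*((1/800)*(1/x+1/y)*(1/m)) + 1/(24*m)*(1/x+1/y) ≤ ε * |1/x + 1/y| := by
    rw [abs_of_pos hPpos]
    have hc : (3/4)*((1/800)*(1/x+1/y)*(1/m)) + 1/(24*m)*(1/x+1/y)
        = ((3/3200)*(1/m) + 1/(24*m))*(1/x+1/y) := by
      field_simp
      ring
    rw [hc]
    have hkey : (3/3200)*(1/m) + 1/(24*m) ≤ ε := by
      have e1 : 1/(24*m) = (1/24)*(1/m) := by ring
      have h2 : (0:ℝ) ≤ 1/m := by positivity
      rw [e1]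
      nlinarith
    exact mul_le_mul_of_nonneg_right hkey hPpos.le
  linarith

/-- With `r_{n,N}² = 2π e^{−(n₊+N₊)} n₊^{n₊} N₊^{N₊} / (N! n!)`, `n₊ = n + 1/2`,
`N₊ = N + 1/2`, one has `r_{n,N} = 1 + (1/48)(1/n + 1/N) + o(1/n + 1/N)` as
`min(n,N) → ∞` (uniformly in how `n, N → ∞`). -/
theorem stmt_7 (r : ℕ → ℕ → ℝ)
    (hr : r = fun n N : ℕ =>
      Real.sqrt (2 * π * Real.exp (-(((n : ℝ) + 1 / 2) + ((N : ℝ) + 1 / 2))) *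
        ((n : ℝ) + 1 / 2) ^ ((n : ℝ) + 1 / 2) * ((N : ℝ) + 1 / 2) ^ ((N : ℝ) + 1 / 2) /
        ((Nat.factorial N : ℝ) * (Nat.factorial n : ℝ)))) :
    (fun p : ℕ × ℕ => r p.1 p.2 - 1 - (1 / 48) * (1 / (p.1 : ℝ) + 1 / (p.2 : ℝ)))
      =o[Filter.atTop.comap (fun p : ℕ × ℕ => min p.1 p.2)]
      (fun p : ℕ × ℕ => 1 / (p.1 : ℝ) + 1 / (p.2 : ℝ)) := by
  have hr' : ∀ n N : ℕ, r n N = Real.exp ((bfun n + bfun N)/2) := by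
    intro n N
    have h2 : Real.sqrt (2*π) * Real.sqrt (2*π) = 2*π :=
      Real.mul_self_sqrt (by positivity)
    have hprod : 2 * π * Real.exp (-(((n : ℝ) + 1 / 2) + ((N : ℝ) + 1 / 2))) *
        ((n : ℝ) + 1 / 2) ^ ((n : ℝ) + 1 / 2) * ((N : ℝ) + 1 / 2) ^ ((N : ℝ) + 1 / 2) /
        ((Nat.factorial N : ℝ) * (Nat.factorial n : ℝ)) = afun n * afun N := by
      unfold afun
      rw [neg_add, Real.exp_add]
      nth_rewrite 1 [← h2]
      ring
    have hsq : afun n * afun N = (Real.exp ((bfun n + bfun N)/2))^2 := by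
      rw [sq, ← Real.exp_add,
        show (bfun n + bfun N)/2 + (bfun n + bfun N)/2 = bfun n + bfun N by ring,
        Real.exp_add]
      unfold bfun
      rw [Real.exp_log (afun_pos n), Real.exp_log (afun_pos N)]
    rw [hr]
    simp only []
    rw [hprod, hsq, Real.sqrt_sq (Real.exp_pos _).le]
  rw [isLittleO_iff]
  intro ε hε
  obtain ⟨M, hM1, hMε⟩ : ∃ M : ℕ, 1 ≤ M ∧ 1/(M:ℝ) ≤ ε := by
    refine ⟨max 1 ⌈ε⁻¹⌉₊, le_max_left _ _, ?_⟩
    have h1 : ε⁻¹ ≤ (⌈ε⁻¹⌉₊ : ℝ) := Nat.le_ceil _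
    have h2 : (⌈ε⁻¹⌉₊ : ℝ) ≤ ((max 1 ⌈ε⁻¹⌉₊ : ℕ):ℝ) := by
      exact_mod_cast le_max_right 1 ⌈ε⁻¹⌉₊
    have h3 : ε⁻¹ ≤ ((max 1 ⌈ε⁻¹⌉₊ : ℕ):ℝ) := h1.trans h2
    have hpos : (0:ℝ) < ((max 1 ⌈ε⁻¹⌉₊ : ℕ):ℝ) := by
      have : (1:ℕ) ≤ max 1 ⌈ε⁻¹⌉₊ := le_max_left _ _
      exact_mod_cast this.trans_lt' (by norm_num)
    rw [div_le_iff₀ hpos]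
    calc (1:ℝ) = ε * ε⁻¹ := (mul_inv_cancel₀ hε.ne').symm
      _ ≤ ε * _ := mul_le_mul_of_nonneg_left h3 hε.le
  have hev : ∀ᶠ p : ℕ × ℕ in Filter.atTop.comap (fun p : ℕ × ℕ => min p.1 p.2),
      M ≤ min p.1 p.2 := tendsto_comap.eventually (eventually_ge_atTop M)
  filter_upwards [hev] with p hp
  obtain ⟨n, N⟩ := p
  simp only [] at hp ⊢
  have hn : M ≤ n := hp.trans (min_le_left _ _)
  have hN : M ≤ N := hp.trans (min_le_right _ _)
  have hn1 : 1 ≤ n := hM1.trans hn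
  have hN1 : 1 ≤ N := hM1.trans hN
  rw [hr' n N, Real.norm_eq_abs, Real.norm_eq_abs]
  exact main_est (m := (M:ℝ)) (by exact_mod_cast hM1) (by exact_mod_cast hn)
    (by exact_mod_cast hN) hMε (bfun_nonneg n) (bfun_nonneg N)
    (bfun_small hn1) (bfun_small hN1) (bfun_est hn1) (bfun_est hN1)
end

section
/- Let Ai denote the Airy function. Then ∫_0^∞ ∫_s^∞ Ai(x+u)² dx du = (−Ai(s)Ai'(s) − 2s·Ai'(s)² + 2s²·Ai(s)²)/3 for every real s. -/
open MeasureTheory Real Filter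

private lemma airy_translate (f : ℝ → ℝ) (a u : ℝ) :
    ∫ x in Set.Ioi a, f (x + u) = ∫ x in Set.Ioi (a + u), f x := by
  have mp := measurePreserving_add_right (volume : Measure ℝ) u
  have me : MeasurableEmbedding (fun x : ℝ => x + u) := measurableEmbedding_addRight u
  have h := mp.setIntegral_preimage_emb me f (Set.Ioi (a + u))
  have hpre : (fun x : ℝ => x + u) ⁻¹' Set.Ioi (a + u) = Set.Ioi a := by ext x; simp
  rwa [hpre] at h

private lemma airy_decay (Ai : ℝ → ℝ)
    (hasymp : Tendsto
      (fun x => Ai x * (2 * Real.sqrt π * x ^ ((1 : ℝ) / 4)) *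
        Real.exp ((2 / 3) * x ^ ((3 : ℝ) / 2)))
      atTop (nhds 1)) :
    ∀ᶠ x in atTop, |Ai x| ≤ exp (-x) := by
  have h1 : ∀ᶠ x in atTop,
      |Ai x * (2 * Real.sqrt π * x ^ ((1 : ℝ) / 4)) * Real.exp ((2 / 3) * x ^ ((3 : ℝ) / 2))| ≤ 2 := by
    have h2 := hasymp.eventually (eventually_le_nhds (by norm_num : (1:ℝ) < 2))
    have h3 := hasymp.eventually (eventually_ge_nhds (by norm_num : (-2:ℝ) < 1))
    filter_upwards [h2, h3] with x hx hx2
    rw [abs_le]; constructor <;> linarith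
  filter_upwards [h1, eventually_ge_atTop (9/4 : ℝ)] with x hx hx94
  have hx1 : (1:ℝ) ≤ x := by linarith
  have hx0 : (0:ℝ) < x := by linarith
  have hsqrtpi : (1:ℝ) ≤ Real.sqrt π := by
    rw [show (1:ℝ) = Real.sqrt 1 by simp]
    exact Real.sqrt_le_sqrt (by linarith [Real.pi_gt_three])
  have hx14 : (1:ℝ) ≤ x ^ ((1:ℝ)/4) := Real.one_le_rpow hx1 (by norm_num)
  have hx32 : x ≤ (2/3) * x ^ ((3:ℝ)/2) := by
    have e1 : x ^ ((3:ℝ)/2) = x * x ^ ((1:ℝ)/2) := by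
      rw [← Real.rpow_one_add' hx0.le (by norm_num)]; norm_num
    have e2 : x ^ ((1:ℝ)/2) = Real.sqrt x := (Real.sqrt_eq_rpow x).symm
    have e3 : (3/2 : ℝ) ≤ Real.sqrt x := by
      rw [show (3/2:ℝ) = Real.sqrt (9/4) by
        rw [show (9/4:ℝ) = (3/2)^2 by norm_num, Real.sqrt_sq]; norm_num]
      exact Real.sqrt_le_sqrt hx94
    rw [e1, e2]; nlinarith
  have hexp : Real.exp x ≤ Real.exp ((2/3) * x ^ ((3:ℝ)/2)) := Real.exp_le_exp.mpr hx32
  have hw : 2 * Real.exp x ≤ (2 * Real.sqrt π * x ^ ((1:ℝ)/4)) * Real.exp ((2/3) * x ^ ((3:ℝ)/2)) := by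
    have h2w : (2:ℝ) ≤ 2 * Real.sqrt π * x ^ ((1:ℝ)/4) := by nlinarith
    nlinarith [Real.exp_pos x, Real.exp_pos ((2/3) * x ^ ((3:ℝ)/2))]
  have habs : |Ai x| * (2 * Real.exp x) ≤ 2 := by
    calc |Ai x| * (2 * Real.exp x)
        ≤ |Ai x| * ((2 * Real.sqrt π * x ^ ((1:ℝ)/4)) * Real.exp ((2/3) * x ^ ((3:ℝ)/2))) :=
          mul_le_mul_of_nonneg_left hw (abs_nonneg _)
      _ = |Ai x * (2 * Real.sqrt π * x ^ ((1:ℝ)/4)) * Real.exp ((2/3) * x ^ ((3:ℝ)/2))| := by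
          rw [abs_mul, abs_mul, abs_of_pos (by positivity : (0:ℝ) < 2 * Real.sqrt π * x ^ ((1:ℝ)/4)),
            abs_of_pos (Real.exp_pos _)]; ring
      _ ≤ 2 := hx
  rw [Real.exp_neg, inv_eq_one_div, le_div_iff₀ (Real.exp_pos x)]
  nlinarith [Real.exp_pos x]

/-- For the Airy function `Ai` (the solution of `y'' = x y` with
`Ai(x) ~ e^{−(2/3)x^{3/2}}/(2√π x^{1/4})` as `x → ∞`), one has, for every real `s`,
`∫_0^∞ ∫_s^∞ Ai(x+u)² dx du = (−Ai(s)Ai'(s) − 2s Ai'(s)² + 2s² Ai(s)²)/3`. -/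
theorem stmt_11 (Ai : ℝ → ℝ) (hsmooth : ContDiff ℝ 2 Ai)
    (hODE : ∀ x, deriv (deriv Ai) x = x * Ai x)
    (hasymp : Tendsto
      (fun x => Ai x * (2 * Real.sqrt π * x ^ ((1 : ℝ) / 4)) *
        Real.exp ((2 / 3) * x ^ ((3 : ℝ) / 2)))
      atTop (nhds 1)) (s : ℝ) :
    (∫ u in Set.Ioi (0 : ℝ), ∫ x in Set.Ioi s, (Ai (x + u)) ^ 2) =
      (-(Ai s * deriv Ai s) - 2 * s * (deriv Ai s) ^ 2 + 2 * s ^ 2 * (Ai s) ^ 2) / 3 := by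
  -- basic differentiability facts
  have hA_diff : Differentiable ℝ Ai := hsmooth.differentiable (by norm_num)
  have hA'_diff : Differentiable ℝ (deriv Ai) := by
    have h2 : ContDiff ℝ (1 + 1) Ai := by norm_num [hsmooth]
    exact (contDiff_succ_iff_deriv.mp h2).2.2.differentiable one_ne_zero
  have hA'_cont : Continuous (deriv Ai) := hsmooth.continuous_deriv (by norm_num)
  have hA_cont : Continuous Ai := hsmooth.continuous
  have hDA : ∀ x, HasDerivAt Ai (deriv Ai x) x := fun x => (hA_diff x).hasDerivAt
  have hDA' : ∀ x, HasDerivAt (deriv Ai) (x * Ai x) x := fun x => by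
    simpa [hODE x] using (hA'_diff x).hasDerivAt
  -- decay
  have hdecay : ∀ᶠ x in atTop, |Ai x| ≤ exp (-x) := airy_decay Ai hasymp
  have hAi0 : Tendsto Ai atTop (nhds 0) :=
    squeeze_zero_norm' (by simpa [Real.norm_eq_abs] using hdecay)
      Real.tendsto_exp_neg_atTop_nhds_zero
  have hA2bound : ∀ᶠ x in atTop, Ai x ^ 2 ≤ exp (-x) := by
    filter_upwards [hdecay, eventually_ge_atTop (0:ℝ)] with x hx hx0
    have h1 : Ai x ^ 2 ≤ exp (-x) ^ 2 := by
      rw [← sq_abs]; exact pow_le_pow_left₀ (abs_nonneg _) hx 2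
    have h2 : exp (-x) ≤ 1 := Real.exp_le_one_iff.mpr (by linarith)
    nlinarith [Real.exp_pos (-x)]
  have hxA2 : Tendsto (fun x => x * Ai x ^ 2) atTop (nhds 0) := by
    apply squeeze_zero_norm' (a := fun x => x ^ 1 * exp (-x))
    · filter_upwards [hA2bound, eventually_ge_atTop (0:ℝ)] with x hx hx0
      rw [Real.norm_eq_abs, abs_mul, abs_of_nonneg hx0, pow_one]
      exact mul_le_mul_of_nonneg_left (by rwa [abs_of_nonneg (sq_nonneg _)]) hx0
    · exact Real.tendsto_pow_mul_exp_neg_atTop_nhds_zero 1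
  have hx2A2 : Tendsto (fun x => x ^ 2 * Ai x ^ 2) atTop (nhds 0) := by
    apply squeeze_zero_norm' (a := fun x => x ^ 2 * exp (-x))
    · filter_upwards [hA2bound, eventually_ge_atTop (0:ℝ)] with x hx hx0
      rw [Real.norm_eq_abs, abs_mul, abs_of_nonneg (by positivity : (0:ℝ) ≤ x ^ 2)]
      exact mul_le_mul_of_nonneg_left (by rwa [abs_of_nonneg (sq_nonneg _)]) (by positivity)
    · exact Real.tendsto_pow_mul_exp_neg_atTop_nhds_zero 2
  -- the function E
  set E : ℝ → ℝ := fun x => (deriv Ai x) ^ 2 - x * Ai x ^ 2 with hEdef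
  have hEd : ∀ x, HasDerivAt E (-(Ai x ^ 2)) x := by
    intro x
    have h := ((hDA' x).pow 2).sub ((hasDerivAt_id x).mul ((hDA x).pow 2))
    convert h using 1; case e'_9 => simp only [Pi.pow_apply, id_eq]; norm_num; ring
    all_goals rfl
  have hE_cont : Continuous E := (hA'_cont.pow 2).sub (continuous_id.mul (hA_cont.pow 2))
  have hE_anti : Antitone E :=
    antitone_of_hasDerivAt_nonpos hEd (fun x => neg_nonpos.mpr (sq_nonneg _))
  -- E tends to 0 at infinity
  have hE0 : Tendsto E atTop (nhds 0) := by
    rw [Metric.tendsto_atTop]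
    intro ε hε
    obtain ⟨N1, hN1⟩ := (Metric.tendsto_atTop.mp hxA2) (ε/2) (by linarith)
    have hδ : (0:ℝ) < Real.sqrt (ε/2) / 2 := by positivity
    obtain ⟨N2, hN2⟩ := (Metric.tendsto_atTop.mp hAi0) (Real.sqrt (ε/2) / 2) hδ
    set b := max N1 N2 with hb
    obtain ⟨c, hc, hceq⟩ := exists_hasDerivAt_eq_slope Ai (deriv Ai)
      (by linarith [le_refl b] : b < b + 1) (hA_cont.continuousOn)
      (fun x _ => hDA x)
    have hcb : N2 ≤ b := le_max_right _ _
    have hAb : |Ai b - 0| < Real.sqrt (ε/2) / 2 := hN2 b hcb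
    have hAb1 : |Ai (b+1) - 0| < Real.sqrt (ε/2) / 2 := hN2 (b+1) (by linarith)
    have hc' : |deriv Ai c| ≤ Real.sqrt (ε/2) := by
      rw [hceq]
      simp only [add_sub_cancel_left, div_one]
      rw [sub_zero] at hAb hAb1
      calc |Ai (b+1) - Ai b| ≤ |Ai (b+1)| + |Ai b| := abs_sub _ _
        _ ≤ Real.sqrt (ε/2) := by linarith
    have hcsq : (deriv Ai c) ^ 2 ≤ ε/2 := by
      have := Real.sq_sqrt (by linarith : (0:ℝ) ≤ ε/2)
      nlinarith [abs_nonneg (deriv Ai c), sq_abs (deriv Ai c)]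
    have hcN1 : N1 ≤ c := le_trans (le_max_left _ _) hc.1.le
    have hEc : E c < ε := by
      have h1 : |c * Ai c ^ 2 - 0| < ε/2 := hN1 c hcN1
      rw [sub_zero] at h1
      have := abs_lt.mp h1
      simp only [hEdef]; nlinarith
    refine ⟨b + 1, fun x hx => ?_⟩
    have hEx_le : E x ≤ E c := hE_anti (by linarith [hc.2] : c ≤ x)
    have hxN1 : N1 ≤ x := by
      have : N1 ≤ b := le_max_left _ _
      linarith
    have h1 : |x * Ai x ^ 2 - 0| < ε/2 := hN1 x hxN1
    rw [sub_zero] at h1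
    have h2 := abs_lt.mp h1
    have hEx_ge : -ε < E x := by
      simp only [hEdef]; nlinarith [sq_nonneg (deriv Ai x)]
    rw [Real.dist_eq, sub_zero, abs_lt]
    exact ⟨hEx_ge, lt_of_le_of_lt hEx_le hEc⟩
  -- deriv Ai tends to 0
  have hA'sq0 : Tendsto (fun x => (deriv Ai x) ^ 2) atTop (nhds 0) := by
    have h := hE0.add hxA2
    rw [add_zero] at h
    exact h.congr (fun x => by simp [hEdef])
  have hA'0 : Tendsto (deriv Ai) atTop (nhds 0) := by
    have h : Tendsto (fun x => Real.sqrt ((deriv Ai x) ^ 2)) atTop (nhds (Real.sqrt 0)) :=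
      (Real.continuous_sqrt.tendsto 0).comp hA'sq0
    rw [Real.sqrt_zero] at h
    have h2 : Tendsto (fun x => |deriv Ai x|) atTop (nhds 0) :=
      h.congr (fun x => Real.sqrt_sq_eq_abs _)
    exact squeeze_zero_norm' (Eventually.of_forall fun x => le_of_eq (Real.norm_eq_abs _))
      h2
  -- integrability of Ai^2
  have hAi2_int : ∀ a : ℝ, IntegrableOn (fun x => Ai x ^ 2) (Set.Ioi a) := by
    intro a
    apply integrable_of_isBigO_exp_neg (b := 1) one_pos ((hA_cont.pow 2).continuousOn)
    apply Asymptotics.IsBigO.of_bound 1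
    filter_upwards [hA2bound] with x hx
    simp only [Real.norm_eq_abs, one_mul, neg_mul, one_mul]
    rw [abs_of_nonneg (sq_nonneg _), abs_of_pos (Real.exp_pos _)]
    exact hx
  -- FTC : ∫_a^∞ Ai^2 = E a
  have hF : ∀ a : ℝ, ∫ x in Set.Ioi a, Ai x ^ 2 = E a := by
    intro a
    have h := integral_Ioi_of_hasDerivAt_of_tendsto' (f := fun x => -E x)
      (f' := fun x => Ai x ^ 2) (a := a) (m := 0)
      (fun x _ => by have := (hEd x).neg; rwa [neg_neg] at this) (hAi2_int a) (by simpa using hE0.neg)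
    rw [h]; ring
  have hE_nonneg : ∀ x, 0 ≤ E x := fun x =>
    (hF x) ▸ setIntegral_nonneg measurableSet_Ioi (fun t _ => sq_nonneg _)
  -- upper bound on E
  obtain ⟨X, hX⟩ := eventually_atTop.mp hdecay
  have hE_upper : ∀ x, max X 0 ≤ x → E x ≤ exp (-x) * exp (-x) := by
    intro x hx
    have hxX : X ≤ x := le_trans (le_max_left _ _) hx
    have hx0 : (0:ℝ) ≤ x := le_trans (le_max_right _ _) hx
    rw [← hF x]
    have hint2 : IntegrableOn (fun t => exp (-x) * exp (-t)) (Set.Ioi x) := by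
      have : IntegrableOn (fun t => exp (-t)) (Set.Ioi x) := by
        simpa using exp_neg_integrableOn_Ioi x one_pos
      exact this.const_mul _
    calc (∫ t in Set.Ioi x, Ai t ^ 2)
        ≤ ∫ t in Set.Ioi x, exp (-x) * exp (-t) := by
          apply setIntegral_mono_on (hAi2_int x) hint2 measurableSet_Ioi
          intro t ht
          have htX : X ≤ t := le_trans hxX ht.le
          have h1 : |Ai t| ≤ exp (-t) := hX t htX
          have h2 : exp (-t) ≤ exp (-x) := Real.exp_le_exp.mpr (by linarith [Set.mem_Ioi.mp ht])
          nlinarith [abs_nonneg (Ai t), sq_abs (Ai t), Real.exp_pos (-t)]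
      _ = exp (-x) * exp (-x) := by
          rw [integral_const_mul, integral_exp_neg_Ioi]
  -- x * E x → 0
  have hxE : Tendsto (fun x => x * E x) atTop (nhds 0) := by
    apply squeeze_zero_norm' (a := fun x => x ^ 1 * exp (-x))
    · filter_upwards [eventually_ge_atTop (max X 0), eventually_ge_atTop (0:ℝ)] with x hx hx0
      rw [Real.norm_eq_abs, abs_mul, abs_of_nonneg hx0, abs_of_nonneg (hE_nonneg x), pow_one]
      have h1 : E x ≤ exp (-x) * exp (-x) := hE_upper x hx
      have h2 : exp (-x) ≤ 1 := Real.exp_le_one_iff.mpr (by linarith)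
      have h3 : E x ≤ exp (-x) := by nlinarith [Real.exp_pos (-x)]
      exact mul_le_mul_of_nonneg_left h3 hx0
    · exact Real.tendsto_pow_mul_exp_neg_atTop_nhds_zero 1
  -- integrability of E
  have hE_int : IntegrableOn E (Set.Ioi s) := by
    apply integrable_of_isBigO_exp_neg (b := 1) one_pos hE_cont.continuousOn
    apply Asymptotics.IsBigO.of_bound 1
    filter_upwards [eventually_ge_atTop (max X 0), eventually_ge_atTop (0:ℝ)] with x hx hx0
    simp only [Real.norm_eq_abs, one_mul, neg_mul]
    rw [abs_of_nonneg (hE_nonneg x), abs_of_pos (Real.exp_pos _)]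
    have h1 : E x ≤ exp (-x) * exp (-x) := hE_upper x hx
    have h2 : exp (-x) ≤ 1 := Real.exp_le_one_iff.mpr (by linarith)
    nlinarith [Real.exp_pos (-x)]
  -- x * (deriv Ai x)^2 → 0
  have hxA'2 : Tendsto (fun x => x * (deriv Ai x) ^ 2) atTop (nhds 0) := by
    have h := hxE.add hx2A2
    rw [add_zero] at h
    exact h.congr (fun x => by simp [hEdef]; ring)
  have hAA' : Tendsto (fun x => Ai x * deriv Ai x) atTop (nhds 0) := by
    simpa using hAi0.mul hA'0
  -- the antiderivative G
  set G : ℝ → ℝ := fun x =>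
    (-(Ai x * deriv Ai x) - 2 * x * (deriv Ai x) ^ 2 + 2 * x ^ 2 * Ai x ^ 2) / 3 with hGdef
  have hGd : ∀ x, HasDerivAt G (-(E x)) x := by
    intro x
    have h := ((((hDA x).mul (hDA' x)).neg.sub
        (((hasDerivAt_id x).const_mul 2).mul ((hDA' x).pow 2))).add
        (((hasDerivAt_pow 2 x).const_mul 2).mul ((hDA x).pow 2))).div_const 3
    convert h using 1; case e'_9 => simp only [Pi.pow_apply, id_eq, hEdef]; norm_num; ring
    all_goals rfl
  have hG0 : Tendsto G atTop (nhds 0) := by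
    have h := ((hAA'.neg.sub (hxA'2.const_mul 2)).add (hx2A2.const_mul 2)).div_const 3
    simp only [neg_zero, mul_zero, sub_zero, add_zero, zero_div] at h
    exact h.congr (fun x => by simp [hGdef]; ring)
  -- FTC for E
  have hEint_eq : ∫ t in Set.Ioi s, E t = G s := by
    have h := integral_Ioi_of_hasDerivAt_of_tendsto' (f := fun x => -G x) (f' := E) (a := s)
      (m := 0) (fun x _ => by have := (hGd x).neg; rwa [neg_neg] at this) hE_int (by simpa using hG0.neg)
    rw [h]; ring
  -- inner integral
  have hinner : ∀ u : ℝ, ∫ x in Set.Ioi s, Ai (x + u) ^ 2 = E (s + u) := by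
    intro u
    have h := airy_translate (fun y => Ai y ^ 2) s u
    simpa using h.trans (hF (s + u))
  calc (∫ u in Set.Ioi (0 : ℝ), ∫ x in Set.Ioi s, (Ai (x + u)) ^ 2)
      = ∫ u in Set.Ioi (0 : ℝ), E (s + u) := by simp only [hinner]
    _ = ∫ t in Set.Ioi s, E t := by
        have h := airy_translate E 0 s
        rw [zero_add] at h
        rw [← h]
        exact setIntegral_congr_fun measurableSet_Ioi (fun u _ => by rw [add_comm])
    _ = G s := hEint_eq
    _ = (-(Ai s * deriv Ai s) - 2 * s * (deriv Ai s) ^ 2 + 2 * s ^ 2 * (Ai s) ^ 2) / 3 := rfl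
end

section
/- The function T(s) = (−Ai(s)Ai'(s) − 2s·Ai'(s)² + 2s²·Ai(s)²)/3 is nonincreasing in s, nonnegative, and satisfies T(s) ≤ C(s₀)·e^{−s} on [s₀, ∞) for a suitable constant C(s₀) depending only on s₀. -/
open Real Filter

set_option maxHeartbeats 2000000

/-- The function `T(s) = (−Ai(s)Ai'(s) − 2s Ai'(s)² + 2s² Ai(s)²)/3` (the trace norm of
the Airy kernel operator on `L²([s,∞))`, with `Ai` the Airy function) is nonincreasing,
nonnegative, and satisfies `T(s) ≤ C(s₀) e^{−s}` on `[s₀,∞)` for a suitable constant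
`C(s₀)` depending only on `s₀`. -/
theorem stmt_12 (Ai : ℝ → ℝ) (hsmooth : ContDiff ℝ 2 Ai)
    (hODE : ∀ x, deriv (deriv Ai) x = x * Ai x)
    (hasymp : Tendsto
      (fun x => Ai x * (2 * Real.sqrt π * x ^ ((1 : ℝ) / 4)) *
        Real.exp ((2 / 3) * x ^ ((3 : ℝ) / 2)))
      atTop (nhds 1))
    (T : ℝ → ℝ)
    (hT : T = fun s =>
      (-(Ai s * deriv Ai s) - 2 * s * (deriv Ai s) ^ 2 + 2 * s ^ 2 * (Ai s) ^ 2) / 3) :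
    Antitone T ∧ (∀ s, 0 ≤ T s) ∧
      ∀ s₀ : ℝ, ∃ C : ℝ, ∀ s ≥ s₀, T s ≤ C * Real.exp (-s) := by
  classical
  open MeasureTheory Set in
  -- basic differentiability
  have hsm2 := hsmooth
  rw [show (2 : WithTop ℕ∞) = 1 + 1 from rfl, contDiff_succ_iff_deriv] at hsm2
  have hd1 : Differentiable ℝ Ai := hsm2.1
  have hd2 : Differentiable ℝ (deriv Ai) := hsm2.2.2.differentiable one_ne_zero
  have hA'd : ∀ x, HasDerivAt Ai (deriv Ai x) x := fun x => (hd1 x).hasDerivAt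
  have hA''d : ∀ x, HasDerivAt (deriv Ai) (x * Ai x) x := fun x => hODE x ▸ (hd2 x).hasDerivAt
  -- derivative of T
  have hTd : ∀ s, HasDerivAt T (s * Ai s ^ 2 - deriv Ai s ^ 2) s := by
    intro s
    rw [hT]
    have h := ((((hA'd s).mul (hA''d s)).neg.sub
        (((hasDerivAt_id s).const_mul 2).mul ((hA''d s).pow 2))).add
        (((hasDerivAt_pow 2 s).const_mul 2).mul ((hA'd s).pow 2))).div_const 3
    refine h.congr_deriv ?_
    simp only [id_eq, Pi.pow_apply]
    push_cast
    ring
  -- derivative of g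
  have hgd : ∀ s, HasDerivAt (fun s => deriv Ai s ^ 2 - s * Ai s ^ 2) (-(Ai s ^ 2)) s := by
    intro s
    have h := ((hA''d s).pow 2).sub ((hasDerivAt_id s).mul ((hA'd s).pow 2))
    refine h.congr_deriv ?_
    simp only [id_eq, Pi.pow_apply]
    push_cast
    ring
  -- the basic estimate on Ai from the asymptotics
  obtain ⟨M, hM9, hb⟩ : ∃ M : ℝ, 9 ≤ M ∧ ∀ x ≥ M, 0 < Ai x ∧ Ai x ≤ exp (-(2*x)) := by
    have h2 := hasymp.eventually_lt_const (show (1:ℝ) < 2 by norm_num)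
    have h0 := hasymp.eventually_const_lt (show (0:ℝ) < 1 by norm_num)
    obtain ⟨M₀, hM₀⟩ := eventually_atTop.mp (h2.and h0)
    refine ⟨max M₀ 9, le_max_right _ _, fun x hx => ?_⟩
    obtain ⟨h2x, h0x⟩ := hM₀ x (le_trans (le_max_left _ _) hx)
    have hx9 : (9:ℝ) ≤ x := le_trans (le_max_right _ _) hx
    have hx0 : (0:ℝ) < x := by linarith
    set c := 2 * Real.sqrt π * x ^ ((1:ℝ)/4) with hc
    set e := Real.exp ((2/3) * x ^ ((3:ℝ)/2)) with he
    have hepos : 0 < e := Real.exp_pos _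
    have hc2 : 2 ≤ c := by
      have h1 : (1:ℝ) ≤ Real.sqrt π := by
        rw [show (1:ℝ) = Real.sqrt 1 by simp]
        exact Real.sqrt_le_sqrt (by linarith [Real.pi_gt_three])
      have h2 : (1:ℝ) ≤ x ^ ((1:ℝ)/4) := Real.one_le_rpow (by linarith) (by norm_num)
      nlinarith
    have hAipos : 0 < Ai x := by
      rcases le_or_gt (Ai x) 0 with h | h
      · exfalso
        have : Ai x * c * e ≤ 0 :=
          mul_nonpos_of_nonpos_of_nonneg (mul_nonpos_of_nonpos_of_nonneg h (by linarith)) hepos.le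
        linarith
      · exact h
    have hAe : Ai x * e ≤ 1 := by
      have hkey : 0 ≤ (c - 2) * (Ai x * e) :=
        mul_nonneg (by linarith) (mul_pos hAipos hepos).le
      nlinarith
    have h32 : x ^ ((3:ℝ)/2) = x * Real.sqrt x := by
      rw [show (3:ℝ)/2 = 1 + 1/2 by norm_num, Real.rpow_add hx0, Real.rpow_one,
        Real.sqrt_eq_rpow]
    have hsq : 3 ≤ Real.sqrt x := by
      nlinarith [Real.sq_sqrt hx0.le, Real.sqrt_nonneg x]
    have hexple : Real.exp (-((2/3) * x ^ ((3:ℝ)/2))) ≤ Real.exp (-(2*x)) := by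
      apply Real.exp_le_exp.mpr
      rw [h32]
      nlinarith
    have hfin : Ai x ≤ Real.exp (-((2/3) * x ^ ((3:ℝ)/2))) := by
      rw [Real.exp_neg, ← he]
      have h := mul_le_mul_of_nonneg_right hAe (inv_nonneg.mpr hepos.le)
      rwa [mul_assoc, mul_inv_cancel₀ hepos.ne', mul_one, one_mul] at h
    exact ⟨hAipos, le_trans hfin hexple⟩
  -- the bound on the derivative of Ai
  have hA'b : ∀ s ≥ M, |deriv Ai s| ≤ exp (-s) := by
    have hcont : Continuous (fun x : ℝ => x * Ai x) := continuous_id.mul hd1.continuous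
    have hbnd : ∀ x ≥ M, ‖x * Ai x‖ ≤ ‖Real.exp (-x)‖ := by
      intro x hx
      obtain ⟨hp, hu⟩ := hb x hx
      have hx0 : (0:ℝ) < x := by linarith
      have h1 : x * Ai x ≤ Real.exp x * Real.exp (-(2*x)) := by
        have hxe : x ≤ Real.exp x := by linarith [Real.add_one_le_exp x]
        nlinarith [Real.exp_pos x]
      rw [← Real.exp_add] at h1
      rw [Real.norm_eq_abs, Real.norm_eq_abs, abs_of_pos (mul_pos hx0 hp),
        abs_of_pos (Real.exp_pos _)]
      calc x * Ai x ≤ Real.exp (x + -(2*x)) := h1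
        _ = Real.exp (-x) := by ring_nf
    have hexpint : ∀ s : ℝ, IntegrableOn (fun x => Real.exp (-x)) (Ioi s) := by
      intro s; simpa using exp_neg_integrableOn_Ioi s one_pos
    have hfint : ∀ s ≥ M, IntegrableOn (fun x : ℝ => x * Ai x) (Ioi s) := by
      intro s hs
      refine MeasureTheory.Integrable.mono (hexpint s) hcont.aestronglyMeasurable.restrict ?_
      filter_upwards [ae_restrict_mem measurableSet_Ioi] with x hx
      exact hbnd x (le_trans hs hx.le)
    have hlim := tendsto_limUnder_of_hasDerivAt_of_integrableOn_Ioi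
      (fun x (_ : x ∈ Ioi M) => hA''d x) (hfint M le_rfl)
    set L := limUnder atTop (deriv Ai) with hLdef
    have hAub : ∀ᶠ t in atTop, Ai t ≤ 1 := by
      filter_upwards [eventually_ge_atTop M] with t ht
      calc Ai t ≤ Real.exp (-(2*t)) := (hb t ht).2
        _ ≤ Real.exp 0 := Real.exp_le_exp.mpr (by linarith)
        _ = 1 := Real.exp_zero
    have hkey : ∀ s₁ t : ℝ, s₁ ≤ t → (∫ x in s₁..t, deriv Ai x) = Ai t - Ai s₁ := by
      intro s₁ t _
      exact intervalIntegral.integral_eq_sub_of_hasDerivAt (fun x _ => hA'd x)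
        (hd2.continuous.intervalIntegrable _ _)
    have hL0 : L = 0 := by
      rcases lt_trichotomy L 0 with hL | hL | hL
      · exfalso
        obtain ⟨s₁, hs₁⟩ := eventually_atTop.mp
          ((hlim.eventually_lt_const (show L < L/2 by linarith)).and (eventually_ge_atTop M))
        have hLne : L ≠ 0 := hL.ne
        obtain ⟨d, hd0, hdval⟩ : ∃ d : ℝ, 0 ≤ d ∧ L/2 * d = -(|Ai s₁| + 1) := by
          refine ⟨2/(-L) * (|Ai s₁| + 1),
            mul_nonneg (div_nonneg (by norm_num) (by linarith)) (by positivity), ?_⟩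
          field_simp
        have hts : s₁ ≤ s₁ + d := by linarith
        have h1 : Ai (s₁ + d) - Ai s₁ ≤ L/2 * (s₁ + d - s₁) := by
          have hmono := intervalIntegral.integral_mono_on (μ := volume) hts
            (hd2.continuous.intervalIntegrable _ _) intervalIntegrable_const
            (fun x hx => (hs₁ x hx.1).1.le)
          rw [hkey s₁ (s₁ + d) hts, intervalIntegral.integral_const, smul_eq_mul] at hmono
          linarith
        have h2 : L/2 * (s₁ + d - s₁) = -(|Ai s₁| + 1) := by
          rw [show s₁ + d - s₁ = d by ring]; exact hdval
        have h3 : 0 < Ai (s₁ + d) := (hb _ (le_trans (hs₁ s₁ le_rfl).2 hts)).1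
        have h4 : Ai s₁ ≤ |Ai s₁| := le_abs_self _
        linarith [h1, h2]
      · exact hL
      · exfalso
        obtain ⟨s₁, hs₁⟩ := eventually_atTop.mp
          ((hlim.eventually_const_lt (show L/2 < L by linarith)).and
            (hAub.and (eventually_ge_atTop M)))
        have hLne : L ≠ 0 := hL.ne'
        obtain ⟨d, hd0, hdval⟩ : ∃ d : ℝ, 0 ≤ d ∧ L/2 * d = |Ai s₁| + 2 := by
          refine ⟨2/L * (|Ai s₁| + 2),
            mul_nonneg (div_nonneg (by norm_num) hL.le) (by positivity), ?_⟩
          field_simp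
        have hts : s₁ ≤ s₁ + d := by linarith
        have h1 : L/2 * (s₁ + d - s₁) ≤ Ai (s₁ + d) - Ai s₁ := by
          have hmono := intervalIntegral.integral_mono_on (μ := volume) hts
            intervalIntegrable_const (hd2.continuous.intervalIntegrable _ _)
            (fun x hx => (hs₁ x hx.1).1.le)
          rw [hkey s₁ (s₁ + d) hts, intervalIntegral.integral_const, smul_eq_mul] at hmono
          linarith
        have h2 : L/2 * (s₁ + d - s₁) = |Ai s₁| + 2 := by
          rw [show s₁ + d - s₁ = d by ring]; exact hdval
        have h3 : Ai (s₁ + d) ≤ 1 := (hs₁ _ hts).2.1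
        have h4 : Ai s₁ ≥ -|Ai s₁| := neg_abs_le _
        linarith
    rw [hL0] at hlim
    intro s hs
    have hint := integral_Ioi_of_hasDerivAt_of_tendsto
      (hd2.continuous.continuousWithinAt) (fun x (_ : x ∈ Ioi s) => hA''d x) (hfint s hs) hlim
    have h1 : |deriv Ai s| = ‖∫ x in Ioi s, x * Ai x‖ := by
      rw [hint]; simp [abs_neg]
    rw [h1]
    calc ‖∫ x in Ioi s, x * Ai x‖ ≤ ∫ x in Ioi s, ‖x * Ai x‖ :=
          norm_integral_le_integral_norm _
      _ ≤ ∫ x in Ioi s, Real.exp (-x) := by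
          apply setIntegral_mono_on (hfint s hs).norm (hexpint s) measurableSet_Ioi
          intro x hx
          have := hbnd x (le_trans hs hx.le)
          simpa [abs_of_pos (Real.exp_pos (-x))] using this
      _ = Real.exp (-s) := integral_exp_neg_Ioi s
  -- two-sided bound on T for s ≥ M
  have hTb : ∀ s, M ≤ s → -(2 * exp (-s)) ≤ T s ∧ T s ≤ 2 * exp (-s) := by
    intro s hs
    have hs9 : (9:ℝ) ≤ s := le_trans hM9 hs
    have hs0 : (0:ℝ) < s := by linarith
    obtain ⟨ha, ha2'⟩ := hb s hs
    obtain ⟨E, hE⟩ : ∃ E, E = Real.exp (-s) := ⟨_, rfl⟩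
    have hb' := hA'b s hs
    rw [← hE] at hb' ⊢
    have hE0 : 0 < E := hE ▸ Real.exp_pos _
    have hE1 : E ≤ 1 := hE ▸ Real.exp_le_one_iff.mpr (by linarith)
    have hE2 : Real.exp (-(2*s)) = E^2 := by
      rw [hE, sq, ← Real.exp_add]; ring_nf
    have ha2 : Ai s ≤ E^2 := hE2 ▸ ha2'
    have hsE : s * E ≤ 1 := by
      have hxe : s ≤ Real.exp s := by linarith [Real.add_one_le_exp s]
      have : Real.exp s * E = 1 := by rw [hE, ← Real.exp_add]; simp
      nlinarith
    obtain ⟨hA'lb, hA'ub⟩ := abs_le.mp hb'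
    have hA'sq : deriv Ai s ^ 2 ≤ E^2 := sq_le_sq' hA'lb hA'ub
    have hterm1_ub : -(Ai s * deriv Ai s) ≤ E := by nlinarith
    have hterm1_lb : -E ≤ -(Ai s * deriv Ai s) := by nlinarith
    have hterm2_ub : -(2 * s * deriv Ai s ^ 2) ≤ 0 := by nlinarith [sq_nonneg (deriv Ai s)]
    have hterm2_lb : -(2*E) ≤ -(2 * s * deriv Ai s ^ 2) := by nlinarith
    have hterm3_lb : (0:ℝ) ≤ 2 * s^2 * Ai s ^ 2 := by positivity
    have h4 : Ai s ^ 2 ≤ E^2 * E^2 := by nlinarith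
    have h5 : (s*E)^2 ≤ 1 := by
      have h0 : 0 ≤ s*E := mul_nonneg hs0.le hE0.le
      calc (s*E)^2 = (s*E)*(s*E) := sq (s*E)
        _ ≤ 1*1 := mul_le_mul hsE hsE h0 (by norm_num)
        _ = 1 := by norm_num
    have h6 : s^2 * (E^2 * E^2) ≤ E^2 := by
      have hh := mul_le_mul_of_nonneg_right h5 (sq_nonneg E)
      calc s^2 * (E^2 * E^2) = (s*E)^2 * E^2 := by ring
        _ ≤ 1 * E^2 := hh
        _ = E^2 := one_mul _
    have hE2' : E^2 ≤ E := by
      calc E^2 = E*E := sq E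
        _ ≤ 1*E := mul_le_mul_of_nonneg_right hE1 hE0.le
        _ = E := one_mul _
    have hterm3_ub : 2 * s^2 * Ai s ^ 2 ≤ 2*E := by
      have hh := mul_le_mul_of_nonneg_left h4 (sq_nonneg s)
      linarith
    have hTeq : T s = (-(Ai s * deriv Ai s) - 2 * s * deriv Ai s ^ 2
        + 2 * s ^ 2 * Ai s ^ 2) / 3 := by rw [hT]
    rw [hTeq]
    constructor
    · linarith
    · linarith
  -- nonnegativity of g, hence T is antitone
  have hganti : Antitone (fun s => deriv Ai s ^ 2 - s * Ai s ^ 2) := by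
    apply antitone_of_deriv_nonpos (fun s => (hgd s).differentiableAt)
    intro s
    rw [(hgd s).deriv]
    exact neg_nonpos.mpr (sq_nonneg _)
  have hg0 : ∀ s, 0 ≤ deriv Ai s ^ 2 - s * Ai s ^ 2 := by
    intro s
    have htend : Tendsto (fun t : ℝ => -Real.exp (-t)) atTop (nhds 0) := by
      have := tendsto_exp_neg_atTop_nhds_zero.neg
      rwa [neg_zero] at this
    apply le_of_tendsto htend
    filter_upwards [eventually_ge_atTop (max s M)] with t ht
    have hts : s ≤ t := le_trans (le_max_left _ _) ht
    have htM : M ≤ t := le_trans (le_max_right _ _) ht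
    have ht9 : (9:ℝ) ≤ t := le_trans hM9 htM
    obtain ⟨hp, hu⟩ := hb t htM
    have h1 : t * Ai t ^ 2 ≤ Real.exp (-t) := by
      have he4 : Real.exp (-(2*t))^2 = Real.exp (-(4*t)) := by
        rw [sq, ← Real.exp_add]; ring_nf
      have hxe : t ≤ Real.exp t := by linarith [Real.add_one_le_exp t]
      have h0 : Ai t ^ 2 ≤ Real.exp (-(2*t)) ^ 2 := pow_le_pow_left₀ hp.le hu 2
      calc t * Ai t ^ 2 ≤ t * Real.exp (-(4*t)) := by
            rw [← he4]; exact mul_le_mul_of_nonneg_left h0 (by linarith)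
        _ ≤ Real.exp t * Real.exp (-(4*t)) :=
            mul_le_mul_of_nonneg_right hxe (Real.exp_pos _).le
        _ = Real.exp (-(3*t)) := by rw [← Real.exp_add]; ring_nf
        _ ≤ Real.exp (-t) := Real.exp_le_exp.mpr (by linarith)
    have h2 := hganti hts
    simp only at h2 ⊢
    nlinarith [sq_nonneg (deriv Ai t)]
  have hAnti : Antitone T := by
    apply antitone_of_deriv_nonpos (fun s => (hTd s).differentiableAt)
    intro s
    rw [(hTd s).deriv]
    linarith [hg0 s]
  -- nonnegativity of T
  have hTnn : ∀ s, 0 ≤ T s := by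
    intro s
    have htend : Tendsto (fun t : ℝ => -(2 * Real.exp (-t))) atTop (nhds 0) := by
      have := (tendsto_exp_neg_atTop_nhds_zero.const_mul (2:ℝ)).neg
      simpa using this
    apply le_of_tendsto htend
    filter_upwards [eventually_ge_atTop (max s M)] with t ht
    have hts : s ≤ t := le_trans (le_max_left _ _) ht
    have htM : M ≤ t := le_trans (le_max_right _ _) ht
    calc -(2 * Real.exp (-t)) ≤ T t := (hTb t htM).1
      _ ≤ T s := hAnti hts
  refine ⟨hAnti, hTnn, fun s₀ => ⟨max 2 (T s₀ * Real.exp M), fun s hs => ?_⟩⟩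
  rcases le_or_gt M s with hMs | hMs
  · calc T s ≤ 2 * Real.exp (-s) := (hTb s hMs).2
      _ ≤ max 2 (T s₀ * Real.exp M) * Real.exp (-s) :=
          mul_le_mul_of_nonneg_right (le_max_left _ _) (Real.exp_pos _).le
  · have h1 : (1:ℝ) ≤ Real.exp (M - s) := Real.one_le_exp (by linarith)
    calc T s ≤ T s₀ := hAnti hs
      _ = T s₀ * 1 := (mul_one _).symm
      _ ≤ T s₀ * Real.exp (M - s) := mul_le_mul_of_nonneg_left h1 (hTnn s₀)
      _ = T s₀ * Real.exp M * Real.exp (-s) := by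
          rw [mul_assoc, ← Real.exp_add]; ring_nf
      _ ≤ max 2 (T s₀ * Real.exp M) * Real.exp (-s) :=
          mul_le_mul_of_nonneg_right (le_max_right _ _) (Real.exp_pos _).le
end

section
/- Fix ω² ∈ [0, 4−δ] with δ > 0 and set ξ₁ = 2 − √(4−ω²), ξ₂ = 2 + √(4−ω²), f(ξ) = (ξ−ξ₁)(ξ−ξ₂)/(4ξ²). Define ζ(ξ) for ξ ≥ ξ₂ by (2/3)ζ^{3/2} = ∫_{ξ₂}^{ξ} f(t)^{1/2} dt. Then as ε → 0⁺, ζ(ξ₂ + ε)^{3/2} = (ε^{3/2} α^{1/2} / (2β)) · (1 + (3/5)·ε·(1/(2α) − 1/β) + O(ε²)), where α = ξ₂ − ξ₁ and β = ξ₂. -/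
open Real Filter Asymptotics intervalIntegral

lemma key_est' (a b s u : ℝ) (ha : 0 < a) (hb : 0 < b) (hs : 0 ≤ s)
    (hu : u ^ 2 = a ^ 2 + s) (hau : a ≤ u) :
    |u / (2 * (b + s)) - a / (2 * b) - s * (1 / (4 * a * b) - a / (2 * b ^ 2))|
      ≤ s ^ 2 * ((b ^ 2 + 4 * a ^ 2 * b + 8 * a ^ 4) / (16 * a ^ 3 * b ^ 3)) := by
  have hbs : 0 < b + s := by linarith
  have hv : 0 < u + a := by linarith
  have hLE : u / (2 * (b + s)) - a / (2 * b) - s * (1 / (4 * a * b) - a / (2 * b ^ 2))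
      = (2*a*b^2*u - 2*a^2*b*(b+s) - s*(b-2*a^2)*(b+s)) / (4*a*b^2*(b+s)) := by
    field_simp
    ring
  have hP : (2*a*b^2*u - 2*a^2*b*(b+s) - s*(b-2*a^2)*(b+s)) * (u+a)^2
      = -(s^2 * (b^2 + (b-2*a^2)*(u+a)^2)) := by
    linear_combination (2*a*b^2*u + 2*a^2*b^2 - s*b^2) * hu
  have hv4 : 4 * a ^ 2 ≤ (u + a) ^ 2 := by nlinarith
  have hup : (2*a*b^2*u - 2*a^2*b*(b+s) - s*(b-2*a^2)*(b+s)) * (4*a^2)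
      ≤ s ^ 2 * (b ^ 2 + 4 * a ^ 2 * b + 8 * a ^ 4) := by
    nlinarith [hP, mul_pos hv hv, sq_nonneg (u+a),
      mul_nonneg (mul_nonneg (sq_nonneg s) (sq_nonneg (u+a))) (sq_nonneg b),
      mul_nonneg (mul_nonneg (mul_nonneg (sq_nonneg s) (sq_nonneg (u+a))) (sq_nonneg a)) hb.le,
      mul_nonneg (mul_nonneg (sq_nonneg s) (sq_nonneg a)) (sq_nonneg b)]
  have hlo : -(s ^ 2 * (b ^ 2 + 4 * a ^ 2 * b + 8 * a ^ 4))
      ≤ (2*a*b^2*u - 2*a^2*b*(b+s) - s*(b-2*a^2)*(b+s)) * (4*a^2) := by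
    nlinarith [hP, mul_pos hv hv,
      mul_nonneg (mul_nonneg (sq_nonneg (s*b)) ha.le) ha.le,
      mul_nonneg (sq_nonneg (s*b)) (by linarith : (0:ℝ) ≤ (u+a)^2 - 4*a^2),
      mul_nonneg (sq_nonneg (s*a^2)) (sq_nonneg (u+a)),
      mul_nonneg (mul_nonneg (mul_nonneg (sq_nonneg s) (sq_nonneg (u+a))) (sq_nonneg a)) hb.le]
  set E := 2*a*b^2*u - 2*a^2*b*(b+s) - s*(b-2*a^2)*(b+s) with hEdef
  set N := b ^ 2 + 4 * a ^ 2 * b + 8 * a ^ 4 with hNdef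
  have hNnn : (0:ℝ) ≤ N := by positivity
  have hK : |E| * (4 * a ^ 2) ≤ s ^ 2 * N := by
    have h4 : (0:ℝ) < 4 * a ^ 2 := by positivity
    have := abs_le.mpr ⟨hlo, hup⟩
    rwa [abs_mul, abs_of_pos h4] at this
  have hD : (0:ℝ) < 4 * a * b ^ 2 * (b + s) := by positivity
  rw [hLE, abs_div, abs_of_pos hD, div_le_iff₀ hD]
  have step1 : |E| ≤ s ^ 2 * N / (4 * a ^ 2) := by
    rw [le_div_iff₀ (by positivity : (0:ℝ) < 4 * a ^ 2)]
    exact hK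
  refine step1.trans ?_
  rw [div_le_iff₀ (by positivity : (0:ℝ) < 4 * a ^ 2)]
  have hexp : s ^ 2 * (N / (16 * a ^ 3 * b ^ 3)) * (4 * a * b ^ 2 * (b + s)) * (4 * a ^ 2)
      = s ^ 2 * N * ((b + s) / b) := by
    field_simp
    ring
  rw [hexp]
  have h1 : (1:ℝ) ≤ (b + s) / b := by
    rw [le_div_iff₀ hb]; linarith
  have h2 := mul_le_mul_of_nonneg_left h1 (mul_nonneg (sq_nonneg s) hNnn)
  nlinarith [h2]

lemma integral_sqrt_poly' (b A B ε : ℝ) (hε : 0 ≤ ε) :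
    ∫ t in b..(b + ε), Real.sqrt (t - b) * (A + B * (t - b))
      = 2 / 3 * A * ε ^ ((3:ℝ)/2) + 2 / 5 * B * ε ^ ((5:ℝ)/2) := by
  set F : ℝ → ℝ := fun t => 2/3 * A * (t - b) ^ ((3:ℝ)/2) + 2/5 * B * (t - b) ^ ((5:ℝ)/2)
    with hF
  have hderiv : ∀ t ∈ Set.uIcc b (b + ε),
      HasDerivAt F (Real.sqrt (t - b) * (A + B * (t - b))) t := by
    intro t ht
    rw [Set.uIcc_of_le (by linarith)] at ht
    have h0 : 0 ≤ t - b := by linarith [ht.1]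
    have d1 : HasDerivAt (fun x : ℝ => x - b) 1 t := (hasDerivAt_id t).sub_const b
    have d3 : HasDerivAt (fun x : ℝ => (x - b) ^ ((3:ℝ)/2))
        (((3:ℝ)/2) * (t - b) ^ ((3:ℝ)/2 - 1) * 1) t :=
      by have := (Real.hasDerivAt_rpow_const (p := (3:ℝ)/2) (x := t - b)
        (Or.inr (by norm_num))).comp t d1; exact this
    have d5 : HasDerivAt (fun x : ℝ => (x - b) ^ ((5:ℝ)/2))
        (((5:ℝ)/2) * (t - b) ^ ((5:ℝ)/2 - 1) * 1) t :=
      by have := (Real.hasDerivAt_rpow_const (p := (5:ℝ)/2) (x := t - b)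
        (Or.inr (by norm_num))).comp t d1; exact this
    have e1 : (t - b) ^ ((3:ℝ)/2 - 1) = Real.sqrt (t - b) := by
      rw [show (3:ℝ)/2 - 1 = 1/2 by norm_num, ← Real.sqrt_eq_rpow]
    have e2 : (t - b) ^ ((5:ℝ)/2 - 1) = (t - b) * Real.sqrt (t - b) := by
      rw [show (5:ℝ)/2 - 1 = 1 + 1/2 by norm_num, Real.rpow_add' h0 (by norm_num),
        Real.rpow_one, ← Real.sqrt_eq_rpow]
    have := (d3.const_mul (2/3 * A)).add (d5.const_mul (2/5 * B))
    refine this.congr_deriv ?_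
    rw [e1, e2]
    ring
  have hint : IntervalIntegrable (fun t => Real.sqrt (t - b) * (A + B * (t - b)))
      MeasureTheory.volume b (b + ε) :=
    ((Real.continuous_sqrt.comp (continuous_id.sub continuous_const)).mul
      (continuous_const.add (continuous_const.mul
        (continuous_id.sub continuous_const)))).intervalIntegrable _ _
  rw [intervalIntegral.integral_eq_sub_of_hasDerivAt hderiv hint]
  simp only [hF, add_sub_cancel_left, sub_self]
  rw [Real.zero_rpow (by norm_num), Real.zero_rpow (by norm_num)]
  ring


/-- Liouville–Green variable expansion near the turning point `ξ₂`. With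
`ω² ∈ [0, 4−δ]`, `ξ₁ = 2 − √(4−ω²)`, `ξ₂ = 2 + √(4−ω²)`,
`f(ξ) = (ξ−ξ₁)(ξ−ξ₂)/(4ξ²)`, and `ζ` defined for `ξ ≥ ξ₂` by
`(2/3)ζ^{3/2} = ∫_{ξ₂}^ξ f(t)^{1/2} dt`, one has, as `ε → 0⁺`,
`ζ(ξ₂+ε)^{3/2} = (ε^{3/2} α^{1/2}/(2β))(1 + (3/5)ε(1/(2α) − 1/β) + O(ε²))`
where `α = ξ₂ − ξ₁` and `β = ξ₂`; i.e. the remainder is `O(ε^{7/2})`. -/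
theorem stmt_17 (ω δ : ℝ) (hδ : 0 < δ) (hω : ω ^ 2 ≤ 4 - δ)
    (ξ₁ ξ₂ α β : ℝ)
    (hξ₁ : ξ₁ = 2 - Real.sqrt (4 - ω ^ 2)) (hξ₂ : ξ₂ = 2 + Real.sqrt (4 - ω ^ 2))
    (hα : α = ξ₂ - ξ₁) (hβ : β = ξ₂) :
    (fun ε : ℝ =>
        ((3 / 2) * ∫ t in ξ₂..(ξ₂ + ε), Real.sqrt ((t - ξ₁) * (t - ξ₂) / (4 * t ^ 2))) -
          ε ^ ((3 : ℝ) / 2) * Real.sqrt α / (2 * β) *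
            (1 + (3 / 5) * ε * (1 / (2 * α) - 1 / β)))
      =O[nhdsWithin 0 (Set.Ioi 0)] (fun ε : ℝ => ε ^ ((7 : ℝ) / 2)) := by
  have hsq : 0 < 4 - ω ^ 2 := by linarith
  have hr : 0 < Real.sqrt (4 - ω ^ 2) := Real.sqrt_pos.mpr hsq
  have hαr : α = 2 * Real.sqrt (4 - ω ^ 2) := by rw [hα, hξ₂, hξ₁]; ring
  have hβ2 : 2 < β := by rw [hβ, hξ₂]; linarith
  have hαpos : 0 < α := by rw [hαr]; linarith
  have hβpos : 0 < β := by linarith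
  set a := Real.sqrt α with ha_def
  have hapos : 0 < a := Real.sqrt_pos.mpr hαpos
  have ha2 : a ^ 2 = α := Real.sq_sqrt hαpos.le
  set c₀ := a / (2 * β) with hc₀
  set w := 1 / (2 * α) - 1 / β with hw
  have hc₁ : c₀ * w = 1 / (4 * a * β) - a / (2 * β ^ 2) := by
    rw [hc₀, hw, ← ha2]
    field_simp
    ring
  set C := (β ^ 2 + 4 * a ^ 2 * β + 8 * a ^ 4) / (16 * a ^ 3 * β ^ 3) with hC
  have hCpos : 0 ≤ C := by positivity
  rw [Asymptotics.isBigO_iff]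
  refine ⟨C, ?_⟩
  filter_upwards [self_mem_nhdsWithin] with ε (hε : ε ∈ Set.Ioi 0)
  rw [Set.mem_Ioi] at hε
  have hξ₂β : ξ₂ = β := hβ.symm
  -- pointwise facts on the interval
  have hgm : ∀ t ∈ Set.Ioc ξ₂ (ξ₂ + ε),
      ‖Real.sqrt ((t - ξ₁) * (t - ξ₂) / (4 * t ^ 2))
        - Real.sqrt (t - ξ₂) * (c₀ + c₀ * w * (t - ξ₂))‖
      ≤ Real.sqrt (t - ξ₂) * (C * ε ^ 2 + 0 * (t - ξ₂)) := by
    intro t ht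
    obtain ⟨ht1, ht2⟩ := ht
    have hs0 : 0 ≤ t - ξ₂ := by linarith
    have htpos : 0 < t := by rw [hξ₂β] at ht1; linarith
    have ht1' : 0 ≤ t - ξ₁ := by
      have : ξ₁ < ξ₂ := by rw [hξ₁, hξ₂]; linarith
      linarith
    set u := Real.sqrt (t - ξ₁) with hu_def
    have hu2 : u ^ 2 = a ^ 2 + (t - ξ₂) := by
      rw [hu_def, Real.sq_sqrt ht1', ha2, hα]; ring
    have hau : a ≤ u := by
      apply Real.sqrt_le_sqrt
      rw [hα]; linarith
    have hgt : Real.sqrt ((t - ξ₁) * (t - ξ₂) / (4 * t ^ 2))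
        = Real.sqrt (t - ξ₂) * (u / (2 * (β + (t - ξ₂)))) := by
      have h2t : β + (t - ξ₂) = t := by rw [hξ₂β]; ring
      rw [h2t]
      rw [show (t - ξ₁) * (t - ξ₂) / (4 * t ^ 2) = (t - ξ₂) * ((t - ξ₁) / (4 * t ^ 2)) by ring]
      rw [Real.sqrt_mul hs0, Real.sqrt_div ht1', show (4:ℝ) * t ^ 2 = (2*t)^2 by ring,
        Real.sqrt_sq (by linarith : (0:ℝ) ≤ 2*t)]
    rw [hgt]
    rw [show Real.sqrt (t - ξ₂) * (u / (2 * (β + (t - ξ₂))))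
        - Real.sqrt (t - ξ₂) * (c₀ + c₀ * w * (t - ξ₂))
        = Real.sqrt (t - ξ₂) * ((u / (2 * (β + (t - ξ₂)))) - (c₀ + c₀ * w * (t - ξ₂))) by ring]
    rw [norm_mul, Real.norm_eq_abs, Real.norm_eq_abs,
      abs_of_nonneg (Real.sqrt_nonneg _)]
    have hkey := key_est' a β (t - ξ₂) u hapos hβpos hs0 hu2 hau
    have hexpr : u / (2 * (β + (t - ξ₂))) - (c₀ + c₀ * w * (t - ξ₂))
        = u / (2 * (β + (t - ξ₂))) - a / (2 * β)
          - (t - ξ₂) * (1 / (4 * a * β) - a / (2 * β ^ 2)) := by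
      rw [hc₀, ← hc₁]; ring
    rw [hexpr]
    have hsle : (t - ξ₂) ^ 2 ≤ ε ^ 2 := by nlinarith
    apply mul_le_mul_of_nonneg_left _ (Real.sqrt_nonneg _)
    calc |u / (2 * (β + (t - ξ₂))) - a / (2 * β)
          - (t - ξ₂) * (1 / (4 * a * β) - a / (2 * β ^ 2))|
        ≤ (t - ξ₂) ^ 2 * C := hkey
      _ ≤ ε ^ 2 * C := by apply mul_le_mul_of_nonneg_right hsle hCpos
      _ = C * ε ^ 2 + 0 * (t - ξ₂) := by ring
  -- integrability
  have hIg : IntervalIntegrable (fun t => Real.sqrt ((t - ξ₁) * (t - ξ₂) / (4 * t ^ 2)))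
      MeasureTheory.volume ξ₂ (ξ₂ + ε) := by
    apply ContinuousOn.intervalIntegrable
    apply Real.continuous_sqrt.comp_continuousOn
    apply ContinuousOn.div
    · fun_prop
    · fun_prop
    · intro t ht
      rw [Set.uIcc_of_le (by linarith)] at ht
      have : 0 < t := by rw [hξ₂β] at ht; cases ht; linarith
      positivity
  have hIm : IntervalIntegrable (fun t => Real.sqrt (t - ξ₂) * (c₀ + c₀ * w * (t - ξ₂)))
      MeasureTheory.volume ξ₂ (ξ₂ + ε) := by
    apply Continuous.intervalIntegrable
    fun_prop
  have hIbound : IntervalIntegrable (fun t => Real.sqrt (t - ξ₂) * (C * ε ^ 2 + 0 * (t - ξ₂)))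
      MeasureTheory.volume ξ₂ (ξ₂ + ε) := by
    apply Continuous.intervalIntegrable
    fun_prop
  -- value of model integral
  have hm_val : ∫ t in ξ₂..(ξ₂ + ε), Real.sqrt (t - ξ₂) * (c₀ + c₀ * w * (t - ξ₂))
      = 2 / 3 * c₀ * ε ^ ((3:ℝ)/2) + 2 / 5 * (c₀ * w) * ε ^ ((5:ℝ)/2) :=
    integral_sqrt_poly' ξ₂ c₀ (c₀ * w) ε hε.le
  have hb_val : ∫ t in ξ₂..(ξ₂ + ε), Real.sqrt (t - ξ₂) * (C * ε ^ 2 + 0 * (t - ξ₂))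
      = 2 / 3 * (C * ε ^ 2) * ε ^ ((3:ℝ)/2) + 2 / 5 * 0 * ε ^ ((5:ℝ)/2) :=
    integral_sqrt_poly' ξ₂ (C * ε ^ 2) 0 ε hε.le
  -- rewrite the main expression
  have hrpow52 : ε ^ ((5:ℝ)/2) = ε * ε ^ ((3:ℝ)/2) := by
    rw [show (5:ℝ)/2 = 1 + 3/2 by norm_num, Real.rpow_add hε, Real.rpow_one]
  have hmain : ε ^ ((3:ℝ)/2) * a / (2 * β) * (1 + 3 / 5 * ε * w)
      = (3:ℝ)/2 * (2 / 3 * c₀ * ε ^ ((3:ℝ)/2) + 2 / 5 * (c₀ * w) * ε ^ ((5:ℝ)/2)) := by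
    rw [hrpow52, hc₀]
    ring
  have hsplit : ((3:ℝ)/2) * (∫ t in ξ₂..(ξ₂ + ε), Real.sqrt ((t - ξ₁) * (t - ξ₂) / (4 * t ^ 2)))
      - ε ^ ((3:ℝ)/2) * a / (2 * β) * (1 + 3 / 5 * ε * w)
      = (3:ℝ)/2 * ∫ t in ξ₂..(ξ₂ + ε),
          (Real.sqrt ((t - ξ₁) * (t - ξ₂) / (4 * t ^ 2))
            - Real.sqrt (t - ξ₂) * (c₀ + c₀ * w * (t - ξ₂))) := by
    rw [intervalIntegral.integral_sub hIg hIm, hmain, hm_val]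
    ring
  rw [hsplit]
  -- final estimate
  have hbnd : ‖∫ t in ξ₂..(ξ₂ + ε),
      (Real.sqrt ((t - ξ₁) * (t - ξ₂) / (4 * t ^ 2))
        - Real.sqrt (t - ξ₂) * (c₀ + c₀ * w * (t - ξ₂)))‖
      ≤ |∫ t in ξ₂..(ξ₂ + ε), Real.sqrt (t - ξ₂) * (C * ε ^ 2 + 0 * (t - ξ₂))| := by
    apply intervalIntegral.norm_integral_le_abs_of_norm_le _ hIbound
    rw [Set.uIoc_of_le (by linarith : ξ₂ ≤ ξ₂ + ε)]
    exact MeasureTheory.ae_restrict_of_forall_mem measurableSet_Ioc hgm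
  have hrpow72 : ε ^ 2 * ε ^ ((3:ℝ)/2) = ε ^ ((7:ℝ)/2) := by
    rw [show (7:ℝ)/2 = 2 + 3/2 by norm_num, Real.rpow_add hε, Real.rpow_two]
  have h72nn : 0 ≤ ε ^ ((7:ℝ)/2) := Real.rpow_nonneg hε.le _
  calc ‖(3:ℝ)/2 * ∫ t in ξ₂..(ξ₂ + ε),
          (Real.sqrt ((t - ξ₁) * (t - ξ₂) / (4 * t ^ 2))
            - Real.sqrt (t - ξ₂) * (c₀ + c₀ * w * (t - ξ₂)))‖
      = (3:ℝ)/2 * ‖∫ t in ξ₂..(ξ₂ + ε),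
          (Real.sqrt ((t - ξ₁) * (t - ξ₂) / (4 * t ^ 2))
            - Real.sqrt (t - ξ₂) * (c₀ + c₀ * w * (t - ξ₂)))‖ := by
        rw [norm_mul]; norm_num
    _ ≤ (3:ℝ)/2 * |∫ t in ξ₂..(ξ₂ + ε), Real.sqrt (t - ξ₂) * (C * ε ^ 2 + 0 * (t - ξ₂))| := by
        linarith [hbnd]
    _ = (3:ℝ)/2 * |2 / 3 * (C * ε ^ 2) * ε ^ ((3:ℝ)/2) + 2 / 5 * 0 * ε ^ ((5:ℝ)/2)| := by
        rw [hb_val]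
    _ = C * (ε ^ 2 * ε ^ ((3:ℝ)/2)) := by
        rw [abs_of_nonneg (by positivity)]
        ring
    _ = C * ‖ε ^ ((7:ℝ)/2)‖ := by
        rw [hrpow72, Real.norm_eq_abs, abs_of_nonneg h72nn]
end
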